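/- Let V be an idempotent variety and F₂ its free algebra on two generators. If s ⇠ r (i.e., r ⇢ s with the arrow reversed: there is a term t with ŝ(x,z) ≈ t(x,z,z) and t(x,x,z) ≈ r̂(x,z)), s' ⇢ r', s'' ⇢ r', and s'' ⇢ r'', then s̄(s',s'') ⇢ r̄(r',r''). -/
import Mathlib


/-- A signature: a type of operation symbols with arities. -/
structure Sgn where
  ops : Type
  arity : ops → ℕ

/-- Terms over a signature with variables from `V`. -/
inductive Trm (S : Sgn) (V : Type) : Type
  | var : V → Trm S V
  | op : (f : S.ops) → (Fin (S.arity f) → Trm S V) → Trm S V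

/-- An algebra for a signature. -/
structure Alg (S : Sgn) where
  carrier : Type
  interp : (f : S.ops) → (Fin (S.arity f) → carrier) → carrier

/-- Evaluation of a term in an algebra under an assignment. -/
def Trm.eval {S : Sgn} {V : Type} (A : Alg S) (asgn : V → A.carrier) :
    Trm S V → A.carrier
  | .var v => asgn v
  | .op f args => A.interp f (fun i => (args i).eval A asgn)

/-- The identity `t ≈ u` holds throughout the class (variety) `K`. -/
def HoldsIn {S : Sgn} {V : Type} (K : Set (Alg S)) (t u : Trm S V) : Prop :=
  ∀ A ∈ K, ∀ asgn : V → A.carrier, t.eval A asgn = u.eval A asgn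

/-- Substitution of terms for variables. -/
def Trm.subst {S : Sgn} {V W : Type} (σ : V → Trm S W) : Trm S V → Trm S W
  | .var v => σ v
  | .op f args => .op f (fun i => (args i).subst σ)

/-- Every basic operation is idempotent throughout `K`. -/
def IdemK {S : Sgn} (K : Set (Alg S)) : Prop :=
  ∀ A ∈ K, ∀ (f : S.ops) (a : A.carrier), A.interp f (fun _ => a) = a

abbrev T3 (S : Sgn) := Trm S (Fin 3)
abbrev T2 (S : Sgn) := Trm S (Fin 2)

def x3 {S : Sgn} : T3 S := .var 0
def y3 {S : Sgn} : T3 S := .var 1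
def z3 {S : Sgn} : T3 S := .var 2

/-- The generator x̄ of the free algebra on two generators (terms as representatives). -/
def xF {S : Sgn} : T2 S := .var 0
/-- The generator z̄. -/
def zF {S : Sgn} : T2 S := .var 1

/-- `app3 t a b c` is the term `t(a,b,c)`. -/
def app3 {S : Sgn} {V : Type} (t : T3 S) (a b c : Trm S V) : Trm S V :=
  t.subst ![a, b, c]

/-- The binary term `ŝ(x,z)` viewed as a ternary term (not depending on `y`). -/
def bin3 {S : Sgn} (s : T2 S) : T3 S := s.subst ![x3, z3]

/-- `sub2 s a b` is `s̄(a,b)`, the composition of binary terms. -/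
def sub2 {S : Sgn} (s a b : T2 S) : T2 S := s.subst ![a, b]

/-- Dashed arrow `s ⇢ r`. -/
def DashedTo {S : Sgn} (K : Set (Alg S)) (s r : T2 S) : Prop :=
  ∃ t : T3 S, HoldsIn K (bin3 s) (app3 t x3 x3 z3) ∧ HoldsIn K (app3 t x3 z3 z3) (bin3 r)

/-- Solid arrow `s → r`. -/
def SolidTo {S : Sgn} (K : Set (Alg S)) (s r : T2 S) : Prop :=
  ∃ t : T3 S, HoldsIn K (bin3 s) (app3 t x3 x3 z3) ∧ HoldsIn K (app3 t x3 z3 z3) (bin3 r) ∧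
    HoldsIn K (app3 t x3 y3 x3) x3



theorem Trm.eval_subst {S : Sgn} {V W : Type} (A : Alg S) (σ : V → Trm S W)
    (asgn : W → A.carrier) : ∀ t : Trm S V,
    (t.subst σ).eval A asgn = t.eval A (fun v => (σ v).eval A asgn)
  | .var v => rfl
  | .op f args => by
    simp only [Trm.subst, Trm.eval]
    congr 1; funext i; exact Trm.eval_subst A σ asgn (args i)

theorem bin3_eval {S : Sgn} (A : Alg S) (s : T2 S) (g : Fin 3 → A.carrier) :
    (bin3 s).eval A g = s.eval A ![g 0, g 2] := by
  rw [bin3, Trm.eval_subst]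
  congr 1; funext i; fin_cases i <;> simp [x3, z3, Trm.eval]

theorem app3_eval {S : Sgn} {V : Type} (A : Alg S) (t : T3 S) (a b c : Trm S V)
    (g : V → A.carrier) :
    (app3 t a b c).eval A g = t.eval A ![a.eval A g, b.eval A g, c.eval A g] := by
  rw [app3, Trm.eval_subst]
  congr 1; funext i; fin_cases i <;> simp

theorem ptwise1 {S : Sgn} {K : Set (Alg S)} {s : T2 S} {t : T3 S}
    (h : HoldsIn K (bin3 s) (app3 t x3 x3 z3)) {A : Alg S} (hA : A ∈ K)
    (a c : A.carrier) : s.eval A ![a, c] = t.eval A ![a, a, c] := by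
  have h' := h A hA ![a, a, c]
  rw [bin3_eval, app3_eval] at h'
  simpa [x3, z3, Trm.eval] using h'

theorem ptwise2 {S : Sgn} {K : Set (Alg S)} {r : T2 S} {t : T3 S}
    (h : HoldsIn K (app3 t x3 z3 z3) (bin3 r)) {A : Alg S} (hA : A ∈ K)
    (a c : A.carrier) : t.eval A ![a, c, c] = r.eval A ![a, c] := by
  have h' := h A hA ![a, c, c]
  rw [bin3_eval, app3_eval] at h'
  simpa [x3, z3, Trm.eval] using h'

/-- if `s ⇠ r` (i.e. `r ⇢ s`), `s' ⇢ r'`, `s'' ⇢ r'` and `s'' ⇢ r''`,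
then `s̄(s',s'') ⇢ r̄(r',r'')`. -/
theorem dashed_subst_rev {S : Sgn} (K : Set (Alg S)) (hid : IdemK K)
    (s r s' r' s'' r'' : T2 S)
    (h1 : DashedTo K r s) (h2 : DashedTo K s' r')
    (h3 : DashedTo K s'' r') (h4 : DashedTo K s'' r'') :
    DashedTo K (sub2 s s' s'') (sub2 r r' r'') := by
  obtain ⟨t, ht1, ht2⟩ := h1
  obtain ⟨t1, ha1, ha2⟩ := h2
  obtain ⟨t2, hb1, hb2⟩ := h3
  obtain ⟨t3, hc1, hc2⟩ := h4
  refine ⟨t.subst ![t1, t2, t3], ?_, ?_⟩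
  · intro A hA asgn
    rw [bin3_eval, app3_eval]
    simp only [x3, z3, Trm.eval]
    rw [sub2, Trm.eval_subst, Trm.eval_subst]
    set a := asgn 0
    set c := asgn 2
    set u := s'.eval A ![a, c] with hu
    set v := s''.eval A ![a, c] with hv
    have hf : (fun i => (![s', s''] i).eval A ![a, c]) = ![u, v] := by
      funext i; fin_cases i <;> simp [hu, hv]
    have hg : (fun i => (![t1, t2, t3] i).eval A ![a, a, c]) = ![u, v, v] := by
      funext i; fin_cases i <;>
        simp [hu, hv, ← ptwise1 ha1 hA, ← ptwise1 hb1 hA, ← ptwise1 hc1 hA]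
    rw [hf, hg]
    exact (ptwise2 ht2 hA u v).symm
  · intro A hA asgn
    rw [bin3_eval, app3_eval]
    simp only [x3, z3, Trm.eval]
    rw [sub2, Trm.eval_subst, Trm.eval_subst]
    set a := asgn 0
    set c := asgn 2
    set u := r'.eval A ![a, c] with hu
    set v := r''.eval A ![a, c] with hv
    have hf : (fun i => (![t1, t2, t3] i).eval A ![a, c, c]) = ![u, u, v] := by
      funext i; fin_cases i <;>
        simp [hu, hv, ptwise2 ha2 hA, ptwise2 hb2 hA, ptwise2 hc2 hA]
    have hg : (fun i => (![r', r''] i).eval A ![a, c]) = ![u, v] := by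
      funext i; fin_cases i <;> simp [hu, hv]
    rw [hf, hg]
    exact (ptwise1 ht1 hA u v).symm
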